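/- For every positive integer s, every positive integer k, and every integer m ≥ s·k, Duplicator wins the game ehr[T_1^{(s,k,m)}, T_2^{(s,k,m)}, s; k]. -/

import Mathlib

/-! ## Rooted trees -/

/-- A rooted tree structure: a vertex type, a root, and a parent map
(`parent v = none` is intended to hold exactly when `v` is the root). -/
structure RTree where
  V : Type
  root : V
  parent : V → Option V

namespace RTree

/-- Iterate the parent map `n` times. -/
def parentIter (T : RTree) : ℕ → T.V → Option T.V
  | 0, v => some v
  | n + 1, v => (T.parent v).bind (T.parentIter n)

/-- `u` is a descendant of `v` (possibly `u = v`). -/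
def IsDesc (T : RTree) (v u : T.V) : Prop :=
  ∃ n, T.parentIter n u = some v

/-- The structure is a genuine rooted, locally finite tree:
exactly the root has no parent, every vertex reaches the root by iterating
the parent map (connectivity and acyclicity), and every vertex has finitely
many children (local finiteness). -/
def IsTree (T : RTree) : Prop :=
  (∀ v, T.parent v = none ↔ v = T.root) ∧
  (∀ v, ∃ n, T.parentIter n v = some T.root) ∧
  (∀ v, {u | T.parent u = some v}.Finite)

open Classical in
/-- The subtree `T(v)` consisting of `v` and all its descendants, rooted at `v`. -/
noncomputable def subtree (T : RTree) (v : T.V) : RTree where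
  V := {u : T.V // T.IsDesc v u}
  root := ⟨v, 0, rfl⟩
  parent u :=
    if u.1 = v then none
    else (T.parent u.1).bind fun w =>
      if h : T.IsDesc v w then some ⟨w, h⟩ else none

end RTree

/-- An isomorphism of rooted trees: a bijection of vertices mapping root to
root and commuting with the parent maps. -/
structure TreeIso (S T : RTree) where
  toEquiv : S.V ≃ T.V
  map_root : toEquiv S.root = T.root
  map_parent : ∀ v, (S.parent v).map toEquiv = T.parent (toEquiv v)

/-! ## First-order logic of rooted trees -/

/-- Terms: variables (de Bruijn indices) and the constant `R` for the root. -/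
inductive FOTerm where
  | var : ℕ → FOTerm
  | root : FOTerm
deriving DecidableEq

/-- First-order formulas in the language of rooted trees: equality `x = y`,
the parent relation `parentOf t t'` (meaning `π(t') = t`, i.e. `t` is the
parent of `t'`), Boolean connectives, and quantifiers (de Bruijn style). -/
inductive FOFormula where
  | eq : FOTerm → FOTerm → FOFormula
  | parentOf : FOTerm → FOTerm → FOFormula
  | not : FOFormula → FOFormula
  | and : FOFormula → FOFormula → FOFormula
  | or : FOFormula → FOFormula → FOFormula
  | imp : FOFormula → FOFormula → FOFormula
  | all : FOFormula → FOFormula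
  | ex : FOFormula → FOFormula
deriving DecidableEq

namespace FOTerm

def eval (T : RTree) (env : ℕ → T.V) : FOTerm → T.V
  | var n => env n
  | root => T.root

def freeBound : FOTerm → ℕ
  | var n => n + 1
  | root => 0

end FOTerm

/-- Kinds of quantifiers, used to count alternations. -/
inductive QKind where
  | ex | all
deriving DecidableEq

/-- The dual of a quantifier kind. -/
def QKind.dual : QKind → QKind
  | .ex => .all
  | .all => .ex

namespace FOFormula

/-- Satisfaction of a formula in a rooted tree under an environment. -/
def Sat (T : RTree) : FOFormula → (ℕ → T.V) → Prop
  | eq t₁ t₂, env => t₁.eval T env = t₂.eval T env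
  | parentOf t₁ t₂, env => T.parent (t₂.eval T env) = some (t₁.eval T env)
  | not φ, env => ¬ φ.Sat T env
  | and φ ψ, env => φ.Sat T env ∧ ψ.Sat T env
  | or φ ψ, env => φ.Sat T env ∨ ψ.Sat T env
  | imp φ ψ, env => φ.Sat T env → ψ.Sat T env
  | all φ, env => ∀ w : T.V, φ.Sat T (fun n => match n with | 0 => w | Nat.succ k => env k)
  | ex φ, env => ∃ w : T.V, φ.Sat T (fun n => match n with | 0 => w | Nat.succ k => env k)

/-- Quantifier depth: the maximum number of nested quantifiers. -/
def qd : FOFormula → ℕ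
  | eq _ _ => 0
  | parentOf _ _ => 0
  | not φ => φ.qd
  | and φ ψ => max φ.qd ψ.qd
  | or φ ψ => max φ.qd ψ.qd
  | imp φ ψ => max φ.qd ψ.qd
  | all φ => φ.qd + 1
  | ex φ => φ.qd + 1

/-- Auxiliary alternation count: `aqdAux φ pol q` is the maximum number of
alternations between (effectively) existential and universal quantifiers along
a nested quantifier sequence of `φ`, given the current polarity `pol`
(`true` = positive; negations and antecedents of implications flip it, so that
e.g. a `∀` under a negation counts as an `∃`) and the effective kind `q` of
the innermost enclosing quantifier (if any). -/
def aqdAux : FOFormula → Bool → Option QKind → ℕ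
  | eq _ _, _, _ => 0
  | parentOf _ _, _, _ => 0
  | not φ, pol, q => φ.aqdAux (!pol) q
  | and φ ψ, pol, q => max (φ.aqdAux pol q) (ψ.aqdAux pol q)
  | or φ ψ, pol, q => max (φ.aqdAux pol q) (ψ.aqdAux pol q)
  | imp φ ψ, pol, q => max (φ.aqdAux (!pol) q) (ψ.aqdAux pol q)
  | all φ, pol, q =>
      (if q = some (if pol then QKind.ex else QKind.all) then 1 else 0) +
        φ.aqdAux pol (some (if pol then QKind.all else QKind.ex))
  | ex φ, pol, q =>
      (if q = some (if pol then QKind.all else QKind.ex) then 1 else 0) +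
        φ.aqdAux pol (some (if pol then QKind.ex else QKind.all))

/-- The number of alternations of quantifiers of a formula: the maximum number
of switches between (effectively) existential and universal quantifiers in a
nested quantifier sequence.  Purely existential or purely universal formulas
have `aqd = 0`. -/
def aqd (φ : FOFormula) : ℕ := φ.aqdAux true none

/-- A bound on the free variables of a formula: all free de Bruijn indices
are `< freeBound`. -/
def freeBound : FOFormula → ℕ
  | eq t₁ t₂ => max t₁.freeBound t₂.freeBound
  | parentOf t₁ t₂ => max t₁.freeBound t₂.freeBound
  | not φ => φ.freeBound
  | and φ ψ => max φ.freeBound ψ.freeBound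
  | or φ ψ => max φ.freeBound ψ.freeBound
  | imp φ ψ => max φ.freeBound ψ.freeBound
  | all φ => φ.freeBound - 1
  | ex φ => φ.freeBound - 1

/-- A sentence is a formula with no free variables. -/
def IsSentence (φ : FOFormula) : Prop := φ.freeBound = 0

end FOFormula

/-- A (closed) formula holds in a rooted tree. -/
def Models (T : RTree) (φ : FOFormula) : Prop :=
  φ.Sat T (fun _ => T.root)

/-- The formula `P_i(x)`, with free variable `x` being de Bruijn index `0`:
`P_0(x) = ∀ y ¬(π(y) = x)` and `P_{i+1}(x) = ∀ y (π(y) = x → ¬ P_i(y))`. -/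
def Pform : ℕ → FOFormula
  | 0 => .all (.not (.parentOf (.var 1) (.var 0)))
  | i + 1 => .all (.imp (.parentOf (.var 1) (.var 0)) (.not (Pform i)))

/-- The sentence `KEIN_i = P_i(R)`. -/
def KEIN : ℕ → FOFormula
  | 0 => .all (.not (.parentOf .root (.var 0)))
  | i + 1 => .all (.imp (.parentOf .root (.var 0)) (.not (Pform i)))

/-! ## Ehrenfeucht games -/

/-- The winning condition for Duplicator: for all pairs `(x_i, y_i)`, `(x_j, y_j)`
in the list of selected/designated pairs, (Main 1) `π(x_j) = x_i ↔ π(y_j) = y_i`,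
and (Main 2) `x_i = x_j ↔ y_i = y_j`. -/
def GoodPairs (T₁ T₂ : RTree) (ps : List (T₁.V × T₂.V)) : Prop :=
  ∀ p ∈ ps, ∀ q ∈ ps,
    (T₁.parent p.1 = some q.1 ↔ T₂.parent p.2 = some q.2) ∧
    (p.1 = q.1 ↔ p.2 = q.2)

/-- Duplicator wins the scheduled Ehrenfeucht game on `T₁, T₂` in which Spoiler
must play his moves in consecutive batches, the batch sizes given by the list
`sched`, switching trees after each batch; `side = true` means Spoiler currently
plays on `T₁` (Duplicator answering on `T₂`), `side = false` means Spoiler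
currently plays on `T₂`.  The list `ps` records the pairs selected so far
(including designated pairs and the pair of roots); Duplicator wins when the
final configuration satisfies `GoodPairs`. -/
def DupWinsSched (T₁ T₂ : RTree) : List ℕ → Bool → List (T₁.V × T₂.V) → Prop
  | [], _, ps => GoodPairs T₁ T₂ ps
  | 0 :: rest, side, ps => DupWinsSched T₁ T₂ rest (!side) ps
  | (n + 1) :: rest, side, ps =>
      if side then
        ∀ x : T₁.V, ∃ y : T₂.V, DupWinsSched T₁ T₂ (n :: rest) side ((x, y) :: ps)
      else
        ∀ y : T₂.V, ∃ x : T₁.V, DupWinsSched T₁ T₂ (n :: rest) side ((x, y) :: ps)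
termination_by sched _ _ => (sched.length, sched.sum)
decreasing_by
  all_goals
    first
      | exact Prod.Lex.left _ _ (Nat.lt_succ_self _)
      | exact Prod.Lex.right _ (by simp [List.sum_cons])

/-- The cost (in switches) for Spoiler of playing on side `side` when his
previous move (if any) was on side `last`. -/
def switchCost (last : Option Bool) (side : Bool) : ℕ :=
  match last with
  | none => 0
  | some b => if b = side then 0 else 1

/-- Duplicator wins the Ehrenfeucht game `EHR` with `rounds` remaining rounds,
`sw` remaining switches allowed to Spoiler, `last` the side on which Spoiler
made his previous move (if any), and `ps` the pairs selected so far.  In each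
round Spoiler picks a side (paying a switch if he changes trees, which he may
do only if he has switches left) and a vertex in that tree, and Duplicator
answers in the other tree. -/
def DupWinsEHRAux (T₁ T₂ : RTree) :
    ℕ → ℕ → Option Bool → List (T₁.V × T₂.V) → Prop
  | 0, _, _, ps => GoodPairs T₁ T₂ ps
  | r + 1, sw, last, ps =>
      ∀ side : Bool, switchCost last side ≤ sw →
        if side then
          ∀ x : T₁.V, ∃ y : T₂.V,
            DupWinsEHRAux T₁ T₂ r (sw - switchCost last side) (some side) ((x, y) :: ps)
        else
          ∀ y : T₂.V, ∃ x : T₁.V,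
            DupWinsEHRAux T₁ T₂ r (sw - switchCost last side) (some side) ((x, y) :: ps)

/-- Duplicator wins the game `EHR[T₁, T₂, s, r]`: `r` rounds, Spoiler may start
on either tree and make at most `s` switches. -/
def DupWinsEHR (T₁ T₂ : RTree) (s r : ℕ) : Prop :=
  DupWinsEHRAux T₁ T₂ r s none [(T₁.root, T₂.root)]

/-! ## The trees `T₁^{(s,k,m)}` and `T₂^{(s,k,m)}` -/

/-- The one-vertex rooted tree. -/
def single : RTree where
  V := PUnit
  root := PUnit.unit
  parent := fun _ => none

/-- Hang the trees `f 0, …, f (n-1)` from a new root: the root of each `f i`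
becomes a child of the new root. -/
def hang (n : ℕ) (f : Fin n → RTree) : RTree where
  V := Unit ⊕ (Σ i : Fin n, (f i).V)
  root := Sum.inl ()
  parent := fun x =>
    match x with
    | Sum.inl _ => none
    | Sum.inr ⟨i, w⟩ =>
      match (f i).parent w with
      | none => some (Sum.inl ())
      | some w' => some (Sum.inr ⟨i, w'⟩)

/-- The pair of trees `(T₁^{(s,k,m)}, T₂^{(s,k,m)})`, indexed by `s` (the
parameter `k` plays no role in the construction).  Conventions for `s = 0`:
`T₁^{(0)}` is a single vertex and `T₂^{(0)}` is a star of `m` childless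
children.  For `s ≥ 1`: in `T₁^{(s+1)}` the root has `m+1` children, from each
of which hangs a copy of `T₂^{(s)}`; in `T₂^{(s+1)}` the root has `m+1`
children, from `m` of which hangs a copy of `T₂^{(s)}` and from the remaining
one hangs a copy of `T₁^{(s)}`. -/
def TreePair (m : ℕ) : ℕ → RTree × RTree
  | 0 => (single, hang m fun _ => single)
  | s + 1 =>
      (hang (m + 1) fun _ => (TreePair m s).2,
       hang (m + 1) fun i => if i.1 = m then (TreePair m s).1 else (TreePair m s).2)

/-- The tree `T₁^{(s,k,m)}`. -/
def Tree1 (s k m : ℕ) : RTree := (TreePair m s).1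

/-- The tree `T₂^{(s,k,m)}`. -/
def Tree2 (s k m : ℕ) : RTree := (TreePair m s).2

/-!
Between `T₁^{(l)}` and `T₂^{(l)}` the only difference is the special branch of `T₂^{(l)}`, which
carries `T₁^{(l-1)}` where `T₁^{(l)}` has `T₂^{(l-1)}`. Duplicator answers in an ordinary branch by
the identity on a matched (or fresh: there are `m ≥ s·k` to spare) ordinary branch, and matches
the special branch with a fresh branch of `T₁^{(l)}`, inside which she plays the same strategy one
level lower, the two trees having exchanged their roles. She keeps track of the active level `a`
of the deepest exposed difference. Spoiler can lower `a` only by playing on the side that carries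
`T₂^{(a)}`, and this side alternates with `a`, so each batch lowers `a` at most once; he can only
win by playing on the side of the star `T₂^{(0)}` once `a = 0`, which takes `s + 1` batches.
-/

section Game

variable {S T : RTree}

def DupAnswers (S T : RTree) (side : Bool) (P : List (S.V × T.V) → Prop)
    (ps : List (S.V × T.V)) : Prop :=
  if side then ∀ x, ∃ y, P ((x, y) :: ps) else ∀ y, ∃ x, P ((x, y) :: ps)

lemma DupAnswers.mono {side : Bool} {P Q : List (S.V × T.V) → Prop} {ps : List (S.V × T.V)}
    (h : DupAnswers S T side P ps) (hPQ : ∀ qs, P qs → Q qs) : DupAnswers S T side Q ps := by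
  cases side
  · exact fun y => (h y).imp fun _ => hPQ _
  · exact fun x => (h x).imp fun _ => hPQ _

lemma DupAnswers.swap {side : Bool} {P : List (S.V × T.V) → Prop} {ps : List (T.V × S.V)}
    (h : DupAnswers S T (!side) P (ps.map Prod.swap)) :
    DupAnswers T S side (fun qs => P (qs.map Prod.swap)) ps := by
  cases side
  · exact fun y => h y
  · exact fun x => h x

lemma dupWinsSched_nil (side : Bool) (ps : List (S.V × T.V)) :
    DupWinsSched S T [] side ps ↔ GoodPairs S T ps := by
  rw [DupWinsSched]

lemma dupWinsSched_zero (rest : List ℕ) (side : Bool) (ps : List (S.V × T.V)) :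
    DupWinsSched S T (0 :: rest) side ps ↔ DupWinsSched S T rest (!side) ps := by
  rw [DupWinsSched]

lemma dupWinsSched_succ (n : ℕ) (rest : List ℕ) (side : Bool) (ps : List (S.V × T.V)) :
    DupWinsSched S T ((n + 1) :: rest) side ps ↔
      DupAnswers S T side (DupWinsSched S T (n :: rest) side) ps := by
  rw [DupWinsSched]; rfl

lemma goodPairs_of_cons_swap {p : T.V × S.V} {ps : List (S.V × T.V)}
    (h : GoodPairs T S (p :: ps.map Prod.swap)) : GoodPairs S T ps := fun x hx y hy =>
  have hxy := h x.swap (by simp [hx]) y.swap (by simp [hy])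
  ⟨hxy.1.symm, hxy.2.symm⟩

end Game

/-- At active level `a` of a game started at level `l`, the side (`true`: the first tree) carrying
the copy of `T₂^{(a)}` in play; only there can Spoiler lower `a`. -/
def critSide (l a : ℕ) : Bool := decide (Even (l + a))

lemma critSide_add_one_right (l a : ℕ) : critSide l (a + 1) = !critSide l a := by
  simp only [critSide, ← add_assoc, Nat.even_add_one, decide_not]

lemma critSide_add_one_left (l a : ℕ) : critSide (l + 1) a = !critSide l a := by
  simp only [critSide, add_right_comm l 1 a, Nat.even_add_one, decide_not]

def LevelStep (l : ℕ) (side : Bool) (a a' : ℕ) : Prop :=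
  a' = a ∨ a' + 1 = a ∧ side = critSide l a

lemma LevelStep.trans {l a a' a'' : ℕ} {side : Bool} (h : LevelStep l side a a')
    (h' : LevelStep l side a' a'') : LevelStep l side a a'' := by
  rcases h with rfl | ⟨rfl, hside⟩
  · exact h'
  · rcases h' with rfl | ⟨-, hside'⟩
    · exact Or.inr ⟨rfl, hside⟩
    · rw [critSide_add_one_right, ← hside'] at hside
      cases side <;> simp at hside

lemma LevelStep.safe {l a a' : ℕ} {side : Bool} (h : LevelStep l side a a')
    (hsafe : a = 0 → side ≠ critSide l a) : a' = 0 → side ≠ critSide l a' := by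
  rcases h with rfl | ⟨rfl, hside⟩
  · exact hsafe
  · simp [critSide_add_one_right, hside]

/-- Spoiler needs more than this many batches, the first one on `side`, to win from level `a`. -/
def batchBound (l : ℕ) (side : Bool) (a : ℕ) : ℕ := a + if side = critSide l a then 0 else 1

lemma LevelStep.batchBound_le {l a a' : ℕ} {side : Bool} (h : LevelStep l side a a') :
    batchBound l side a ≤ batchBound l (!side) a' + 1 := by
  rcases h with rfl | ⟨rfl, hside⟩
  · cases side <;> cases hc : critSide l a' <;> simp [batchBound, hc] <;> omega
  · simp [batchBound, critSide_add_one_right, hside]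

section Strategy

variable {S T : RTree} {m l : ℕ}

/-- Invariants `I b a ps` are indexed by the number `b` of moves played and the active level `a`. -/
def IsForth (I : ℕ → ℕ → List (S.V × T.V) → Prop) (l m : ℕ) : Prop :=
  ∀ side b a ps, I b a ps → b < m → (a = 0 → side ≠ critSide l a) →
    DupAnswers S T side (fun ps' => ∃ a', LevelStep l side a a' ∧ I (b + 1) a' ps') ps

lemma IsForth.swap {I : ℕ → ℕ → List (S.V × T.V) → Prop} (h : IsForth I l m) :
    IsForth (fun b a (ps : List (T.V × S.V)) => I b a (ps.map Prod.swap)) (l + 1) m := by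
  intro side b a ps hI hb hsafe
  rw [critSide_add_one_left] at hsafe
  refine (h (!side) b a _ hI hb fun ha => by simpa using hsafe ha).swap.mono ?_
  rintro qs ⟨a', hstep, hI'⟩
  refine ⟨a', ?_, hI'⟩
  simpa [LevelStep, critSide_add_one_left] using hstep

theorem dupWinsSched_cons {I : ℕ → ℕ → List (S.V × T.V) → Prop} (hforth : IsForth I l m)
    {rest : List ℕ} {side : Bool} (n : ℕ) :
    ∀ b a ps, I b a ps → b + n ≤ m → (a = 0 → side ≠ critSide l a) →
      (∀ a' ps', LevelStep l side a a' → I (b + n) a' ps' → DupWinsSched S T rest (!side) ps') →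
      DupWinsSched S T (n :: rest) side ps := by
  induction n with
  | zero =>
    intro b a ps hI _ _ hnext
    exact (dupWinsSched_zero _ _ _).2 (hnext a ps (Or.inl rfl) hI)
  | succ n ih =>
    intro b a ps hI hbud hsafe hnext
    refine (dupWinsSched_succ _ _ _ _).2 ((hforth side b a ps hI (by omega) hsafe).mono ?_)
    rintro ps' ⟨a', hstep, hI'⟩
    refine ih (b + 1) a' ps' hI' (by omega) (hstep.safe hsafe) fun a'' ps'' hstep' hI'' => ?_
    exact hnext a'' ps'' (hstep.trans hstep') (by rwa [Nat.add_right_comm, add_assoc] at hI'')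

theorem dupWinsSched_replicate {I : ℕ → ℕ → List (S.V × T.V) → Prop}
    (hgood : ∀ b a ps, I b a ps → GoodPairs S T ps) (hforth : IsForth I l m) (k : ℕ) :
    ∀ r side b a ps, I b a ps → b + r * k ≤ m → r ≤ batchBound l side a →
      DupWinsSched S T (List.replicate r k) side ps := by
  intro r
  induction r with
  | zero => exact fun side b a ps hI _ _ => (dupWinsSched_nil _ _).2 (hgood b a ps hI)
  | succ r ih =>
    intro side b a ps hI hbud hr
    rw [Nat.succ_mul, ← add_assoc, Nat.add_right_comm] at hbud
    rw [List.replicate_succ]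
    refine dupWinsSched_cons hforth k b a ps hI (by omega) ?_ fun a' ps' hstep hI' => ?_
    · rintro rfl hside
      simp [batchBound, hside] at hr
    · exact ih (!side) (b + k) a' ps' hI' hbud (by have := hstep.batchBound_le; omega)

structure IsLevelInv {S T : RTree} (I : ℕ → ℕ → List (S.V × T.V) → Prop) (l m : ℕ) : Prop where
  mono : ∀ b a ps, I b a ps → I (b + 1) a ps
  init : ∀ b, I b l [(S.root, T.root)]
  good : ∀ b a ps, I b a ps → GoodPairs S T ((S.root, T.root) :: ps)
  forth : IsForth I l m

end Strategy

namespace hang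

variable {n : ℕ} {f : Fin n → RTree}

def incl (i : Fin n) {A : RTree} (h : f i = A) (v : A.V) : (hang n f).V :=
  Sum.inr ⟨i, cast (congrArg RTree.V h.symm) v⟩

variable {i i' : Fin n} {A A' : RTree} {h : f i = A} {h' : f i' = A'}

lemma parent_root : (hang n f).parent (hang n f).root = none := rfl

lemma parent_eq_none_iff (x : (hang n f).V) : (hang n f).parent x = none ↔ x = (hang n f).root := by
  rcases x with ⟨⟩ | ⟨i, v⟩
  · exact iff_of_true rfl rfl
  · simp only [hang]
    cases (f i).parent v <;> simp

lemma exists_incl_eq (i : Fin n) (h : f i = A) (v : (f i).V) :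
    ∃ w, incl i h w = (Sum.inr ⟨i, v⟩ : (hang n f).V) := by
  subst h
  exact ⟨v, rfl⟩

lemma incl_ne_root (v : A.V) : incl i h v ≠ (hang n f).root := Sum.inr_ne_inl

lemma incl_inj {v w : A.V} : incl i h v = incl i h w ↔ v = w := by
  subst h
  refine ⟨fun hvw => eq_of_heq (Sigma.mk.inj_iff.1 (Sum.inr_injective hvw)).2, congrArg _⟩

lemma eq_of_incl_eq_incl {v : A.V} {w : A'.V} (hvw : incl i h v = incl i' h' w) : i = i' :=
  congrArg Sigma.fst (Sum.inr_injective hvw)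

lemma parent_incl (v : A.V) :
    (hang n f).parent (incl i h v) =
      (A.parent v).elim (some (hang n f).root) fun w => some (incl i h w) := by
  subst h
  simp only [hang, incl, cast_eq]
  cases (f i).parent v <;> rfl

lemma parent_incl_eq_root_iff (v : A.V) :
    (hang n f).parent (incl i h v) = some (hang n f).root ↔ A.parent v = none := by
  rw [parent_incl]
  cases A.parent v <;> simp [incl_ne_root]

lemma parent_incl_eq_incl_iff (v w : A.V) :
    (hang n f).parent (incl i h v) = some (incl i h w) ↔ A.parent v = some w := by
  rw [parent_incl]
  cases A.parent v <;> simp [(incl_ne_root _).symm, incl_inj]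

lemma eq_of_parent_incl_eq_incl {v : A.V} {w : A'.V}
    (hvw : (hang n f).parent (incl i h v) = some (incl i' h' w)) : i = i' := by
  rw [parent_incl] at hvw
  cases hv : A.parent v <;> simp only [hv, Option.elim, Option.some.injEq] at hvw
  · exact absurd hvw.symm (incl_ne_root w)
  · exact eq_of_incl_eq_incl hvw

end hang

def InjPairs {α β : Type*} (L : List (α × β)) : Prop :=
  ∀ q ∈ L, ∀ q' ∈ L, (q.1 = q'.1 ↔ q.2 = q'.2)

namespace InjPairs

variable {α β : Type*} {L : List (α × β)}

lemma nil : InjPairs ([] : List (α × β)) := by simp [InjPairs]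

lemma cons {x : α} {y : β} (hL : InjPairs L) (hxy : ∀ q ∈ L, (q.1 = x ↔ q.2 = y)) :
    InjPairs ((x, y) :: L) := by
  intro q hq q' hq'
  rcases List.mem_cons.1 hq with rfl | hq <;> rcases List.mem_cons.1 hq' with rfl | hq'
  · simp
  · simpa [eq_comm] using hxy q' hq'
  · exact hxy q hq
  · exact hL q hq q' hq'

lemma exists_snd [Fintype β] (hL : InjPairs L) (avoid : List β) (havoid : ∀ q ∈ L, q.2 ∉ avoid)
    (hlen : L.length + avoid.length < Fintype.card β) (x : α) :
    ∃ y ∉ avoid, ∀ q ∈ L, (q.1 = x ↔ q.2 = y) := by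
  by_cases hx : ∃ q ∈ L, q.1 = x
  · obtain ⟨q, hq, rfl⟩ := hx
    exact ⟨q.2, havoid q hq, fun q' hq' => hL q' hq' q hq⟩
  · push Not at hx
    have hlen' : (L.map Prod.snd ++ avoid).length < Fintype.card β := by simpa using hlen
    obtain ⟨y, hy⟩ := Cardinal.exists_notMem_of_length_lt (L.map Prod.snd ++ avoid)
      (by rw [Cardinal.mk_fintype]; exact_mod_cast hlen')
    simp only [List.mem_append, List.mem_map, not_or, not_exists, not_and] at hy
    exact ⟨y, hy.2, fun q hq => iff_of_false (hx q hq) (fun h => hy.1 q hq h)⟩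

lemma exists_fst [Fintype α] (hL : InjPairs L) (hlen : L.length < Fintype.card α) (y : β) :
    ∃ x, ∀ q ∈ L, (q.1 = x ↔ q.2 = y) := by
  have hL' : InjPairs (L.map Prod.swap) := fun q hq q' hq' => by
    obtain ⟨p, hp, rfl⟩ := List.mem_map.1 hq
    obtain ⟨p', hp', rfl⟩ := List.mem_map.1 hq'
    exact (hL p hp p' hp').symm
  obtain ⟨x, -, hx⟩ := hL'.exists_snd [] (by simp) (by simpa using hlen) y
  exact ⟨x, fun q hq => (hx q.swap (List.mem_map_of_mem hq)).symm⟩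

end InjPairs

def PairsAgree (S T : RTree) (p q : S.V × T.V) : Prop :=
  (S.parent p.1 = some q.1 ↔ T.parent p.2 = some q.2) ∧ (p.1 = q.1 ↔ p.2 = q.2)

section HangAgree

variable {n n' : ℕ} {f : Fin n → RTree} {g : Fin n' → RTree} {i i' : Fin n} {j j' : Fin n'}
  {A A' C C' : RTree} {hX : f i = A} {hX' : f i' = A'} {hY : g j = C} {hY' : g j' = C'}

lemma pairsAgree_root_root :
    PairsAgree (hang n f) (hang n' g) ((hang n f).root, (hang n' g).root)
      ((hang n f).root, (hang n' g).root) :=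
  ⟨by simp [hang.parent_root], iff_of_true rfl rfl⟩

lemma pairsAgree_root_incl (v : A.V) (w : C.V) :
    PairsAgree (hang n f) (hang n' g) ((hang n f).root, (hang n' g).root)
      (hang.incl i hX v, hang.incl j hY w) :=
  ⟨by simp [hang.parent_root],
    iff_of_false (hang.incl_ne_root (h := hX) v).symm (hang.incl_ne_root (h := hY) w).symm⟩

lemma pairsAgree_incl_root {v : A.V} {w : C.V} (h : A.parent v = none ↔ C.parent w = none) :
    PairsAgree (hang n f) (hang n' g) (hang.incl i hX v, hang.incl j hY w)
      ((hang n f).root, (hang n' g).root) := by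
  refine ⟨?_, iff_of_false (hang.incl_ne_root (h := hX) v) (hang.incl_ne_root (h := hY) w)⟩
  rwa [hang.parent_incl_eq_root_iff, hang.parent_incl_eq_root_iff]

lemma pairsAgree_incl_incl_of_ne (hi : i ≠ i') (hj : j ≠ j') (v : A.V) (w : C.V) (v' : A'.V)
    (w' : C'.V) :
    PairsAgree (hang n f) (hang n' g) (hang.incl i hX v, hang.incl j hY w)
      (hang.incl i' hX' v', hang.incl j' hY' w') :=
  ⟨iff_of_false (hi ∘ hang.eq_of_parent_incl_eq_incl (h := hX) (h' := hX'))
      (hj ∘ hang.eq_of_parent_incl_eq_incl (h := hY) (h' := hY')),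
    iff_of_false (hi ∘ hang.eq_of_incl_eq_incl (h := hX) (h' := hX'))
      (hj ∘ hang.eq_of_incl_eq_incl (h := hY) (h' := hY'))⟩

lemma pairsAgree_incl_incl_iff (v v' : A.V) (w w' : C.V) :
    PairsAgree (hang n f) (hang n' g) (hang.incl i hX v, hang.incl j hY w)
      (hang.incl i hX v', hang.incl j hY w') ↔ PairsAgree A C (v, w) (v', w') := by
  simp only [PairsAgree, hang.parent_incl_eq_incl_iff, hang.incl_inj]

end HangAgree

abbrev hangCopies (m : ℕ) (A : RTree) : RTree := hang (m + 1) fun _ => A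

abbrev hangCopiesLast (m : ℕ) (A B : RTree) : RTree :=
  hang (m + 1) fun i => if i.1 = m then B else A

section HangCopies

variable {m : ℕ} {A B : RTree}

abbrev hangCopies.br (i : Fin (m + 1)) (w : A.V) : (hangCopies m A).V := hang.incl i rfl w

abbrev hangCopiesLast.br (i : Fin m) (w : A.V) : (hangCopiesLast m A B).V :=
  hang.incl i.castSucc (if_neg i.isLt.ne) w

abbrev hangCopiesLast.last (e : B.V) : (hangCopiesLast m A B).V :=
  hang.incl (Fin.last m) (if_pos rfl) e

lemma hangCopies.cases (y : (hangCopies m A).V) :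
    y = (hangCopies m A).root ∨ ∃ i w, y = hangCopies.br i w := by
  rcases y with ⟨⟩ | ⟨i, w⟩
  · exact Or.inl rfl
  · exact Or.inr ⟨i, w, rfl⟩

lemma hangCopiesLast.cases (x : (hangCopiesLast m A B).V) :
    x = (hangCopiesLast m A B).root ∨ (∃ i w, x = hangCopiesLast.br i w) ∨
      ∃ e, x = hangCopiesLast.last e := by
  rcases x with ⟨⟩ | ⟨i, v⟩
  · exact Or.inl rfl
  · cases i using Fin.lastCases with
    | last =>
      obtain ⟨e, he⟩ := hang.exists_incl_eq
        (f := fun i : Fin (m + 1) => if i.1 = m then B else A) _ (if_pos rfl) v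
      exact Or.inr (Or.inr ⟨e, he.symm⟩)
    | cast i =>
      obtain ⟨w, hw⟩ := hang.exists_incl_eq
        (f := fun i : Fin (m + 1) => if i.1 = m then B else A) _ (if_neg i.isLt.ne) v
      exact Or.inr (Or.inl ⟨i, w, hw.symm⟩)

/-- Duplicator's bookkeeping in `hangCopiesLast m A B` versus `hangCopies m A`: the matched
ordinary branches, the branch matched with the last (special) one, and the pairs played in these
two branches, stored as (vertex of `A`, vertex of `B`). -/
structure HangMatching (m : ℕ) (A B : RTree) where
  normal : List (Fin m × Fin (m + 1))
  partner : Option (Fin (m + 1))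
  inner : List (A.V × B.V)

namespace HangMatching

def Admits (M : HangMatching m A B) (p : (hangCopiesLast m A B).V × (hangCopies m A).V) :
    Prop :=
  p = ((hangCopiesLast m A B).root, (hangCopies m A).root) ∨
    (∃ q ∈ M.normal, ∃ w : A.V, p = (hangCopiesLast.br q.1 w, hangCopies.br q.2 w)) ∨
    ∃ i₀ ∈ M.partner, ∃ ce ∈ M.inner, p = (hangCopiesLast.last ce.2, hangCopies.br i₀ ce.1)

lemma Admits.mono {M M' : HangMatching m A B} {p} (h : M.Admits p) (hn : M.normal ⊆ M'.normal)
    (hs : ∀ i₀ ∈ M.partner, i₀ ∈ M'.partner ∧ M.inner ⊆ M'.inner) : M'.Admits p := by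
  rcases h with h | ⟨q, hq, w, rfl⟩ | ⟨i₀, hi₀, ce, hce, rfl⟩
  · exact Or.inl h
  · exact Or.inr (Or.inl ⟨q, hn hq, w, rfl⟩)
  · exact Or.inr (Or.inr ⟨i₀, (hs i₀ hi₀).1, ce, (hs i₀ hi₀).2 hce, rfl⟩)

variable {I : ℕ → ℕ → List (A.V × B.V) → Prop} {l b a : ℕ}

structure Valid (I : ℕ → ℕ → List (A.V × B.V) → Prop) (l b a : ℕ) (M : HangMatching m A B)
    (ps : List ((hangCopiesLast m A B).V × (hangCopies m A).V)) : Prop where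
  injPairs : InjPairs M.normal
  partner_ne : ∀ q ∈ M.normal, M.partner ≠ some q.2
  length_le : M.normal.length ≤ b
  level_of_none : M.partner = none → a = l + 1
  inner_of_ne_none : M.partner ≠ none → I b a M.inner
  admits : ∀ p ∈ ps, M.Admits p

variable {M : HangMatching m A B} {ps : List ((hangCopiesLast m A B).V × (hangCopies m A).V)}

lemma Valid.pairsAgree (hA : ∀ v, A.parent v = none ↔ v = A.root)
    (hB : ∀ e, B.parent e = none ↔ e = B.root)
    (hgood : ∀ b a qs, I b a qs → GoodPairs A B ((A.root, B.root) :: qs))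
    (hM : M.Valid I l b a ps) {p q} (hp : M.Admits p) (hq : M.Admits q) :
    PairsAgree _ _ p q := by
  have hinner : ∀ i₀ ∈ M.partner, GoodPairs A B ((A.root, B.root) :: M.inner) :=
    fun i₀ hi₀ => hgood _ _ _ (hM.inner_of_ne_none (by simp_all))
  rcases hp with rfl | ⟨r, hr, v, rfl⟩ | ⟨i₀, hi₀, ce, hce, rfl⟩ <;>
    rcases hq with rfl | ⟨r', hr', v', rfl⟩ | ⟨i₀', hi₀', ce', hce', rfl⟩
  · exact pairsAgree_root_root
  · exact pairsAgree_root_incl _ _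
  · exact pairsAgree_root_incl _ _
  · exact pairsAgree_incl_root Iff.rfl
  · by_cases h : r.1 = r'.1
    · obtain rfl : r = r' := Prod.ext h ((hM.injPairs r hr r' hr').1 h)
      exact (pairsAgree_incl_incl_iff _ _ _ _).2 ⟨Iff.rfl, Iff.rfl⟩
    · exact pairsAgree_incl_incl_of_ne ((Fin.castSucc_injective _).ne h)
        (mt (hM.injPairs r hr r' hr').2 h) _ _ _ _
  · exact pairsAgree_incl_incl_of_ne (Fin.castSucc_lt_last _).ne
      (fun h => hM.partner_ne r hr (by rw [h]; exact hi₀')) _ _ _ _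
  · have hroot := (hinner i₀ hi₀ ce (by simp [hce]) _ List.mem_cons_self).2
    exact pairsAgree_incl_root (by rw [hA, hB]; exact hroot.symm)
  · exact pairsAgree_incl_incl_of_ne (Fin.castSucc_lt_last _).ne.symm
      (fun h => hM.partner_ne r' hr' (by rw [← h]; exact hi₀)) _ _ _ _
  · obtain rfl : i₀ = i₀' := Option.some_injective _ (hi₀.symm.trans hi₀')
    have hce := hinner i₀ hi₀ ce (by simp [hce]) ce' (by simp [hce'])
    exact (pairsAgree_incl_incl_iff _ _ _ _).2 ⟨hce.1.symm, hce.2.symm⟩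

lemma Valid.goodPairs (hA : ∀ v, A.parent v = none ↔ v = A.root)
    (hB : ∀ e, B.parent e = none ↔ e = B.root)
    (hgood : ∀ b a qs, I b a qs → GoodPairs A B ((A.root, B.root) :: qs))
    (hM : M.Valid I l b a ps) :
    GoodPairs _ _ (((hangCopiesLast m A B).root, (hangCopies m A).root) :: ps) := by
  have hadm : ∀ p ∈ ((hangCopiesLast m A B).root, (hangCopies m A).root) :: ps, M.Admits p :=
    List.forall_mem_cons.2 ⟨Or.inl rfl, hM.admits⟩
  exact fun p hp q hq => hM.pairsAgree hA hB hgood (hadm p hp) (hadm q hq)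

lemma Valid.mono (hmono : ∀ b a qs, I b a qs → I (b + 1) a qs) (hM : M.Valid I l b a ps) :
    M.Valid I l (b + 1) a ps :=
  { hM with
    length_le := hM.length_le.trans b.le_succ
    inner_of_ne_none := fun h => hmono _ _ _ (hM.inner_of_ne_none h) }

lemma Valid.cons_root (hM : M.Valid I l b a ps) :
    M.Valid I l b a (((hangCopiesLast m A B).root, (hangCopies m A).root) :: ps) :=
  { hM with admits := List.forall_mem_cons.2 ⟨Or.inl rfl, hM.admits⟩ }

lemma Valid.cons_normal (hmono : ∀ b a qs, I b a qs → I (b + 1) a qs)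
    (hM : M.Valid I l b a ps) {iX : Fin m} {iY : Fin (m + 1)}
    (hXY : ∀ q ∈ M.normal, (q.1 = iX ↔ q.2 = iY)) (hiY : M.partner ≠ some iY) (w : A.V) :
    ({ M with normal := (iX, iY) :: M.normal } : HangMatching m A B).Valid I l (b + 1) a
      ((hangCopiesLast.br iX w, hangCopies.br iY w) :: ps) where
  injPairs := hM.injPairs.cons hXY
  partner_ne := List.forall_mem_cons.2 ⟨hiY, hM.partner_ne⟩
  length_le := Nat.succ_le_succ hM.length_le
  level_of_none := hM.level_of_none
  inner_of_ne_none h := hmono _ _ _ (hM.inner_of_ne_none h)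
  admits := List.forall_mem_cons.2 ⟨Or.inr (Or.inl ⟨_, List.mem_cons_self, w, rfl⟩),
    fun p hp => (hM.admits p hp).mono (List.subset_cons_self _ _) fun _ h =>
      ⟨h, List.Subset.refl _⟩⟩

lemma Valid.cons_special (hM : M.Valid I l b a ps) {i₀ : Fin (m + 1)} (hi₀ : M.partner = some i₀)
    {c : A.V} {e : B.V} {a' : ℕ} (hI : I (b + 1) a' ((c, e) :: M.inner)) :
    ({ M with inner := (c, e) :: M.inner } : HangMatching m A B).Valid I l (b + 1) a'
      ((hangCopiesLast.last e, hangCopies.br i₀ c) :: ps) where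
  injPairs := hM.injPairs
  partner_ne := hM.partner_ne
  length_le := hM.length_le.trans b.le_succ
  level_of_none h := absurd (hi₀.symm.trans h) (Option.some_ne_none _)
  inner_of_ne_none _ := hI
  admits := List.forall_mem_cons.2 ⟨Or.inr (Or.inr ⟨i₀, hi₀, _, List.mem_cons_self, rfl⟩),
    fun p hp => (hM.admits p hp).mono (List.Subset.refl _) fun _ h =>
      ⟨h, List.subset_cons_self _ _⟩⟩

lemma Valid.activate (hinit : I b l [(A.root, B.root)]) (hM : M.Valid I l b a ps)
    (hnone : M.partner = none) (hb : b < m) :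
    ∃ i₀, ({ M with partner := some i₀, inner := [(A.root, B.root)] } : HangMatching m A B).Valid
      I l b l ps := by
  obtain ⟨i₀, hi₀⟩ := Cardinal.exists_notMem_of_length_lt (M.normal.map Prod.snd)
    (by simpa using hM.length_le.trans_lt (hb.trans m.lt_succ_self))
  refine ⟨i₀, hM.injPairs, fun q hq h => hi₀ ?_, hM.length_le, nofun, fun _ => hinit,
    fun p hp => (hM.admits p hp).mono (List.Subset.refl _) (by simp [hnone])⟩
  exact List.mem_map.2 ⟨q, hq, (Option.some_injective _ h).symm⟩

end HangMatching

def HangInv (m : ℕ) (I : ℕ → ℕ → List (A.V × B.V) → Prop) (l b a : ℕ)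
    (ps : List ((hangCopiesLast m A B).V × (hangCopies m A).V)) : Prop :=
  ∃ M : HangMatching m A B, M.Valid I l b a ps

section HangInv

variable {I : ℕ → ℕ → List (A.V × B.V) → Prop} {l : ℕ}

lemma HangMatching.Valid.exists_partner_eq_some (hinit : ∀ b, I b l [(A.root, B.root)])
    {M : HangMatching m A B} {b a : ℕ} {ps} (hM : M.Valid I l b a ps) (hb : b < m)
    (hsafe : a = 0 → true ≠ critSide (l + 1) a) :
    ∃ (M₁ : HangMatching m A B) (a₁ : ℕ) (i₀ : Fin (m + 1)), M₁.Valid I l b a₁ ps ∧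
      M₁.partner = some i₀ ∧ (a₁ = 0 → false ≠ critSide l a₁) ∧
      ∀ a', LevelStep l false a₁ a' → LevelStep (l + 1) true a a' := by
  cases hp : M.partner with
  | some i₀ =>
    refine ⟨M, a, i₀, hM, hp, by simpa [critSide_add_one_left] using hsafe, fun a' h => ?_⟩
    simpa [LevelStep, critSide_add_one_left] using h
  | none =>
    -- entering the special branch for the first time is Spoiler's step from level `l + 1` to `l`
    obtain ⟨i₀, hM₁⟩ := hM.activate (hinit b) hp hb
    have hl : critSide l l = true := by simp [critSide]
    refine ⟨_, l, i₀, hM₁, rfl, by simp [hl], ?_⟩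
    rintro a' (rfl | ⟨-, h⟩)
    · rw [hM.level_of_none hp]
      exact Or.inr ⟨rfl, by simp [critSide_add_one_left, critSide_add_one_right, hl]⟩
    · simp [hl] at h

theorem HangInv.isForth (hmono : ∀ b a qs, I b a qs → I (b + 1) a qs)
    (hinit : ∀ b, I b l [(A.root, B.root)]) (hforth : IsForth I l m) :
    IsForth (HangInv m I l) (l + 1) m := by
  rintro side b a ps ⟨M, hM⟩ hb hsafe
  cases side
  · intro y
    rcases hangCopies.cases y with rfl | ⟨iY, c, rfl⟩
    · exact ⟨_, a, Or.inl rfl, M, (hM.mono hmono).cons_root⟩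
    by_cases hiY : M.partner = some iY
    · obtain ⟨e, a', hstep, hI'⟩ := hforth true b a M.inner (hM.inner_of_ne_none (by simp [hiY]))
        hb (by simpa [critSide_add_one_left] using hsafe) c
      exact ⟨hangCopiesLast.last e, a', by simpa [LevelStep, critSide_add_one_left] using hstep,
        _, hM.cons_special hiY hI'⟩
    · obtain ⟨iX, hXY⟩ := hM.injPairs.exists_fst (by simpa using hM.length_le.trans_lt hb) iY
      exact ⟨hangCopiesLast.br iX c, a, Or.inl rfl, _, hM.cons_normal hmono hXY hiY c⟩
  · intro x
    rcases hangCopiesLast.cases x with rfl | ⟨iX, w, rfl⟩ | ⟨e, rfl⟩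
    · exact ⟨_, a, Or.inl rfl, M, (hM.mono hmono).cons_root⟩
    · obtain ⟨iY, hiY, hXY⟩ := hM.injPairs.exists_snd M.partner.toList
        (fun q hq h => hM.partner_ne q hq (Option.mem_toList.1 h))
        (by have := hM.length_le; cases M.partner <;> simp <;> omega) iX
      exact ⟨hangCopies.br iY w, a, Or.inl rfl, _,
        hM.cons_normal hmono hXY (fun h => hiY (by simp [h])) w⟩
    · obtain ⟨M₁, a₁, i₀, hM₁, hi₀, hsafe₁, hstep₁⟩ := hM.exists_partner_eq_some hinit hb hsafe
      obtain ⟨c, a', hstep, hI'⟩ := hforth false b a₁ M₁.inner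
        (hM₁.inner_of_ne_none (by simp [hi₀])) hb hsafe₁ e
      exact ⟨hangCopies.br i₀ c, a', hstep₁ a' hstep, _, hM₁.cons_special hi₀ hI'⟩

theorem IsLevelInv.hang (hI : IsLevelInv I l m) (hA : ∀ v, A.parent v = none ↔ v = A.root)
    (hB : ∀ e, B.parent e = none ↔ e = B.root) : IsLevelInv (HangInv m I l) (l + 1) m where
  mono := fun _ _ _ ⟨M, hM⟩ => ⟨M, hM.mono hI.mono⟩
  init _ := ⟨⟨[], none, []⟩, InjPairs.nil, by simp, by simp, fun _ => rfl, by simp,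
    by simp [HangMatching.Admits]⟩
  good := fun _ _ _ ⟨_, hM⟩ => hM.goodPairs hA hB hI.good
  forth := HangInv.isForth hI.mono hI.init hI.forth

end HangInv

end HangCopies

/-- Pairs carry the `T₂`-vertex first, so that the game in the special branch, where the roles of
the trees are exchanged, has pairs of the same shape one level lower. -/
def TreePairInv (m : ℕ) :
    (l : ℕ) → ℕ → ℕ → List ((TreePair m l).2.V × (TreePair m l).1.V) → Prop
  | 0, _, a, ps => a = 0 ∧ ∀ p ∈ ps, p = ((TreePair m 0).2.root, (TreePair m 0).1.root)
  | l + 1, b, a, ps => HangInv m (TreePairInv m l) l b a ps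

lemma treePair_parent_eq_none_iff (m l : ℕ) :
    (∀ v, (TreePair m l).1.parent v = none ↔ v = (TreePair m l).1.root) ∧
      ∀ v, (TreePair m l).2.parent v = none ↔ v = (TreePair m l).2.root := by
  cases l with
  | zero => exact ⟨fun _ => iff_of_true rfl rfl, hang.parent_eq_none_iff⟩
  | succ l => exact ⟨hang.parent_eq_none_iff, hang.parent_eq_none_iff⟩

lemma isLevelInv_treePairInv_zero (m : ℕ) : IsLevelInv (TreePairInv m 0) 0 m where
  mono _ _ _ := id
  init _ := ⟨rfl, by simp⟩
  good := by
    rintro _ _ ps ⟨-, hps⟩ p hp q hq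
    have hall : ∀ x ∈ ((TreePair m 0).2.root, (TreePair m 0).1.root) :: ps,
        x = ((TreePair m 0).2.root, (TreePair m 0).1.root) :=
      List.forall_mem_cons.2 ⟨rfl, hps⟩
    obtain rfl := hall p hp
    obtain rfl := hall q hq
    exact ⟨⟨nofun, nofun⟩, iff_of_true rfl rfl⟩
  forth := by
    rintro (_ | _) _ a ps ⟨rfl, hps⟩ _ hsafe
    · exact fun _ => ⟨_, 0, Or.inl rfl, rfl, List.forall_mem_cons.2 ⟨rfl, hps⟩⟩
    · exact absurd rfl (hsafe rfl)

theorem isLevelInv_treePairInv (m : ℕ) : ∀ l, IsLevelInv (TreePairInv m l) l m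
  | 0 => isLevelInv_treePairInv_zero m
  | l + 1 => (isLevelInv_treePairInv m l).hang (treePair_parent_eq_none_iff m l).2
      (treePair_parent_eq_none_iff m l).1

theorem dup_wins_ehr_trees_general (s k m : ℕ) (hm : s * k ≤ m) :
    ∀ side : Bool,
      DupWinsSched (Tree1 s k m) (Tree2 s k m) (List.replicate s k) side
        [((Tree1 s k m).root, (Tree2 s k m).root)] := by
  intro side
  have hI := isLevelInv_treePairInv m s
  exact dupWinsSched_replicate (I := fun b a ps => TreePairInv m s b a (ps.map Prod.swap))
    (fun b a ps h => goodPairs_of_cons_swap (hI.good b a _ h)) hI.forth.swap k s side 0 s _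
    (hI.init 0) (by simpa using hm) (Nat.le_add_right _ _)

/-- For every positive `s`, positive `k` and `m ≥ s·k`, Duplicator
wins `ehr[T₁^{(s,k,m)}, T₂^{(s,k,m)}, s; k]` (whichever tree Spoiler starts
on). -/
theorem dup_wins_ehr_trees (s k m : ℕ) (hs : 0 < s) (hk : 0 < k) (hm : s * k ≤ m) :
    ∀ side : Bool,
      DupWinsSched (Tree1 s k m) (Tree2 s k m) (List.replicate s k) side
        [((Tree1 s k m).root, (Tree2 s k m).root)] :=
  dup_wins_ehr_trees_general s k m hm
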